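/- arXiv:1606.04211 — 2 statements merged into one kernel-verified Lean document; each statement's English description precedes it below -/
import Mathlib

section
/- Step-function translation estimate, case h ≤ δt: let (u^k)_{k=0}^{N} be elements of a normed space E with Σ_{k=0}^{N-1} ‖u^{k+1} - u^k‖² ≤ C_M, let u_{δt} : [0, Nδt) → E be the step function equal to u^k on [k·δt, (k+1)·δt), and let 0 < h ≤ δt. Then ∫_0^{Nδt - h} ‖u_{δt}(t+h) - u_{δt}(t)‖² dt ≤ h·C_M. -/
open MeasureTheory

lemma floorDivEq {δt : ℝ} (hδt : 0 < δt) {t : ℝ} (ht : 0 ≤ t) {k : ℕ}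
    (h1 : (k : ℝ) * δt ≤ t) (h2 : t < ((k : ℝ) + 1) * δt) : ⌊t / δt⌋₊ = k := by
  rw [Nat.floor_eq_iff (div_nonneg ht hδt.le)]
  constructor
  · rw [le_div_iff₀ hδt]; exact h1
  · rw [div_lt_iff₀ hδt]; exact h2

/-- Step-function translation estimate, case `h ≤ δt`. -/
theorem stmt4 {E : Type*} [NormedAddCommGroup E] (u : ℕ → E) (N : ℕ) (δt C_M h : ℝ)
    (hδt : 0 < δt) (hh : 0 < h) (hhδt : h ≤ δt)
    (hsum : ∑ k ∈ Finset.range N, ‖u (k + 1) - u k‖ ^ 2 ≤ C_M) :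
    ∫ t in Set.Ioo (0 : ℝ) ((N : ℝ) * δt - h),
      ‖u ⌊(t + h) / δt⌋₊ - u ⌊t / δt⌋₊‖ ^ 2 ≤ h * C_M := by
  set g : ℝ → ℝ := fun t => ∑ k ∈ Finset.range N,
    Set.indicator (Set.Ico (((k : ℝ) + 1) * δt - h) (((k : ℝ) + 1) * δt))
      (fun _ => ‖u (k + 1) - u k‖ ^ 2) t with hg
  have key : ∀ t ∈ Set.Ioo (0 : ℝ) ((N : ℝ) * δt - h),
      ‖u ⌊(t + h) / δt⌋₊ - u ⌊t / δt⌋₊‖ ^ 2 = g t := by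
    rintro t ⟨ht0, htN⟩
    set k := ⌊t / δt⌋₊ with hk
    have hkle : (k : ℝ) * δt ≤ t := by
      rw [← le_div_iff₀ hδt]
      exact Nat.floor_le (div_nonneg ht0.le hδt.le)
    have hklt : t < ((k : ℝ) + 1) * δt := by
      rw [← div_lt_iff₀ hδt]
      exact Nat.lt_floor_add_one _
    have hkN : k < N := by
      rw [hk, Nat.floor_lt (div_nonneg ht0.le hδt.le), div_lt_iff₀ hδt]
      linarith
    have hzero : ∀ j ∈ Finset.range N, j ≠ k →
        Set.indicator (Set.Ico (((j : ℝ) + 1) * δt - h) (((j : ℝ) + 1) * δt))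
          (fun _ => ‖u (j + 1) - u j‖ ^ 2) t = 0 := by
      intro j _ hjk
      apply Set.indicator_of_notMem
      rintro ⟨hj1, hj2⟩
      exact hjk (hk.trans (floorDivEq hδt ht0.le (by nlinarith) hj2)).symm
    by_cases hc : t + h < ((k : ℝ) + 1) * δt
    · have hfl : ⌊(t + h) / δt⌋₊ = k := floorDivEq hδt (by linarith) (by linarith) hc
      rw [hfl, sub_self, norm_zero]
      have : g t = 0 := Finset.sum_eq_zero fun j hj => by
        by_cases hjk : j = k
        · subst hjk
          apply Set.indicator_of_notMem
          rintro ⟨hj1, _⟩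
          linarith
        · exact hzero j hj hjk
      rw [this]; ring
    · push_neg at hc
      have hfl : ⌊(t + h) / δt⌋₊ = k + 1 :=
        floorDivEq hδt (by linarith) (by push_cast; linarith) (by push_cast; linarith)
      rw [hfl]
      simp only [hg]
      rw [Finset.sum_eq_single k (fun j hj hjk => hzero j hj hjk)
        (fun hmem => absurd (Finset.mem_range.2 hkN) hmem)]
      rw [Set.indicator_of_mem (Set.mem_Ico.2 ⟨by linarith, hklt⟩)]
  have hintk : ∀ k : ℕ, Integrable
      (Set.indicator (Set.Ico (((k : ℝ) + 1) * δt - h) (((k : ℝ) + 1) * δt))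
        (fun _ => ‖u (k + 1) - u k‖ ^ 2)) := by
    intro k
    rw [integrable_indicator_iff measurableSet_Ico]
    exact integrableOn_const measure_Ico_lt_top.ne
  have hgint : Integrable g := by
    rw [hg]
    exact integrable_finset_sum _ fun k _ => hintk k
  have hgnn : 0 ≤ᵐ[volume] g :=
    Filter.Eventually.of_forall fun t =>
      Finset.sum_nonneg fun k _ => Set.indicator_nonneg (fun _ _ => sq_nonneg _) _
  calc ∫ t in Set.Ioo (0 : ℝ) ((N : ℝ) * δt - h),
      ‖u ⌊(t + h) / δt⌋₊ - u ⌊t / δt⌋₊‖ ^ 2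
      = ∫ t in Set.Ioo (0 : ℝ) ((N : ℝ) * δt - h), g t :=
        setIntegral_congr_fun measurableSet_Ioo key
    _ ≤ ∫ t, g t := setIntegral_le_integral hgint hgnn
    _ = ∑ k ∈ Finset.range N, h * ‖u (k + 1) - u k‖ ^ 2 := by
        rw [hg, integral_finset_sum _ fun k _ => hintk k]
        refine Finset.sum_congr rfl fun k _ => ?_
        rw [integral_indicator_const _ measurableSet_Ico, measureReal_def, Real.volume_Ico,
          show ((k : ℝ) + 1) * δt - (((k : ℝ) + 1) * δt - h) = h by ring,
          ENNReal.toReal_ofReal hh.le, smul_eq_mul]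
    _ = h * ∑ k ∈ Finset.range N, ‖u (k + 1) - u k‖ ^ 2 := by rw [Finset.mul_sum]
    _ ≤ h * C_M := mul_le_mul_of_nonneg_left hsum hh.le
end

section
/- Correction-step energy estimate: let ε, δt > 0 and suppose v̂ ∈ H¹(Ω)^d with v̂·ν = 0 on ∂Ω satisfies (ε/δt) v̂ − ∇(div(v̂) + div(ṽ)) = 0 weakly, for some ṽ ∈ H¹(Ω)^d. Then ‖v̂‖²_{L²} + (δt/(2ε))‖div(v̂)‖²_{L²} ≤ (δt/(2ε))‖div(ṽ)‖²_{L²}. -/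
open MeasureTheory

/-- Divergence of a vector field on `ℝ^d`: `div f (x) = ∑ i ∂_i f_i (x)`. -/
noncomputable def dvg {d : ℕ} (f : EuclideanSpace ℝ (Fin d) → EuclideanSpace ℝ (Fin d))
    (x : EuclideanSpace ℝ (Fin d)) : ℝ :=
  ∑ i, fderiv ℝ f x (EuclideanSpace.single i 1) i

private lemma sq_integrable' {α : Type*} [MeasurableSpace α] {μ : Measure α} {f : α → ℝ}
    (hf : MemLp f 2 μ) : Integrable (fun x => f x ^ 2) μ := by
  have h := hf.integrable_norm_rpow two_ne_zero ENNReal.ofNat_ne_top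
  have h3 : ∀ x, ‖f x‖ ^ (2 : ENNReal).toReal = f x ^ 2 := fun x => by
    have h2 : (2 : ENNReal).toReal = ((2 : ℕ) : ℝ) := by simp
    rw [h2, Real.rpow_natCast, Real.norm_eq_abs, sq_abs]
  exact h.congr (Filter.Eventually.of_forall h3)

private lemma mul_integrable' {α : Type*} [MeasurableSpace α] {μ : Measure α} {f g : α → ℝ}
    (hf : MemLp f 2 μ) (hg : MemLp g 2 μ) : Integrable (fun x => f x * g x) μ := by
  have hf2 := sq_integrable' hf
  have hg2 := sq_integrable' hg
  refine Integrable.mono' ((hf2.add hg2).div_const 2) (hf.1.mul hg.1) ?_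
  filter_upwards with x
  simp only [Pi.add_apply]
  rw [Real.norm_eq_abs, abs_mul]
  nlinarith [sq_nonneg (|f x| - |g x|), sq_abs (f x), sq_abs (g x),
    abs_nonneg (f x), abs_nonneg (g x)]

/-- Correction-step energy estimate: testing the correction equation
`(ε/δt) v̂ − ∇(div v̂ + div ṽ) = 0` with `v̂` yields
`‖v̂‖²_{L²} + (δt/(2ε))‖div v̂‖²_{L²} ≤ (δt/(2ε))‖div ṽ‖²_{L²}`. -/
theorem stmt11 {d : ℕ} (Ω : Set (EuclideanSpace ℝ (Fin d))) (hΩ : IsOpen Ω)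
    (hbd : Bornology.IsBounded Ω)
    (ε δt : ℝ) (hε : 0 < ε) (hδt : 0 < δt)
    (vh vt : EuclideanSpace ℝ (Fin d) → EuclideanSpace ℝ (Fin d))
    (hvh : MemLp vh 2 (volume.restrict Ω))
    (hdvh : MemLp (fun x => dvg vh x) 2 (volume.restrict Ω))
    (hdvt : MemLp (fun x => dvg vt x) 2 (volume.restrict Ω))
    (hweak : (ε / δt) * (∫ x in Ω, ‖vh x‖ ^ 2)
        + ∫ x in Ω, (dvg vh x + dvg vt x) * dvg vh x = 0) :
    (∫ x in Ω, ‖vh x‖ ^ 2) + (δt / (2 * ε)) * ∫ x in Ω, (dvg vh x) ^ 2 ≤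
      (δt / (2 * ε)) * ∫ x in Ω, (dvg vt x) ^ 2 := by
  have hInt_ab : Integrable (fun x => (dvg vh x + dvg vt x) * dvg vh x) (volume.restrict Ω) :=
    mul_integrable' (hdvh.add hdvt) hdvh
  have hInt_a2 : Integrable (fun x => dvg vh x ^ 2) (volume.restrict Ω) := sq_integrable' hdvh
  have hInt_b2 : Integrable (fun x => dvg vt x ^ 2) (volume.restrict Ω) := sq_integrable' hdvt
  have hsq : 0 ≤ ∫ x in Ω, (dvg vh x + dvg vt x) ^ 2 := integral_nonneg fun x => sq_nonneg _
  have hexp : ∫ x in Ω, (dvg vh x + dvg vt x) ^ 2 =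
      2 * (∫ x in Ω, (dvg vh x + dvg vt x) * dvg vh x)
        + ((∫ x in Ω, dvg vt x ^ 2) - ∫ x in Ω, dvg vh x ^ 2) := by
    rw [show (fun x => (dvg vh x + dvg vt x) ^ 2)
        = fun x => 2 * ((dvg vh x + dvg vt x) * dvg vh x) + (dvg vt x ^ 2 - dvg vh x ^ 2) from
      funext fun x => by ring]
    have hInt_sub : Integrable (fun x => dvg vt x ^ 2 - dvg vh x ^ 2) (volume.restrict Ω) :=
      hInt_b2.sub hInt_a2
    have hInt_mul : Integrable (fun x => 2 * ((dvg vh x + dvg vt x) * dvg vh x))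
        (volume.restrict Ω) := hInt_ab.const_mul 2
    rw [integral_add hInt_mul hInt_sub, integral_const_mul, integral_sub hInt_b2 hInt_a2]
  have key : -(2 * ∫ x in Ω, (dvg vh x + dvg vt x) * dvg vh x)
      ≤ (∫ x in Ω, dvg vt x ^ 2) - ∫ x in Ω, dvg vh x ^ 2 := by
    rw [hexp] at hsq; linarith
  have hI1 : ∫ x in Ω, ‖vh x‖ ^ 2
      = -(δt / ε) * ∫ x in Ω, (dvg vh x + dvg vt x) * dvg vh x := by
    have hne : ε ≠ 0 := hε.ne'
    have hne2 : δt ≠ 0 := hδt.ne'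
    field_simp at hweak ⊢
    linarith
  rw [hI1]
  have hpos : (0:ℝ) ≤ δt / (2 * ε) := by positivity
  have h2 := mul_le_mul_of_nonneg_left key hpos
  have hdiv : δt / (2 * ε) * 2 = δt / ε := by
    field_simp
  rw [mul_sub] at h2
  have h4 : δt / (2 * ε) * -(2 * ∫ x in Ω, (dvg vh x + dvg vt x) * dvg vh x)
      = -(δt / ε) * ∫ x in Ω, (dvg vh x + dvg vt x) * dvg vh x := by
    rw [← hdiv]; ring
  linarith [h2, h4]
end
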